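/- arXiv:1901.09768 — 2 statements merged into one kernel-verified Lean document; each statement's English description precedes it below -/
import Mathlib

section
/- Let M be a nonsingular totally positive n×n matrix and K a nonsingular row-stochastic totally positive n×n matrix. Then the minimal singular value of MK is less than or equal to the minimal singular value of M. -/
open Matrix BigOperators

/-- A real square matrix is totally positive if all its minors are nonnegative. -/
def TotPos {n : ℕ} (A : Matrix (Fin n) (Fin n) ℝ) : Prop :=
  ∀ (k : ℕ) (r c : Fin k → Fin n), StrictMono r → StrictMono c →
    0 ≤ (A.submatrix r c).det

/-- Row-stochastic: nonnegative entries, each row sums to 1. -/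
def RowStoch {n : ℕ} (A : Matrix (Fin n) (Fin n) ℝ) : Prop :=
  (∀ i j, 0 ≤ A i j) ∧ ∀ i, ∑ j, A i j = 1

/-- J = diag(1, -1, 1, ..., (-1)^(n-1)). -/
def Jmat (n : ℕ) : Matrix (Fin n) (Fin n) ℝ :=
  Matrix.diagonal fun i => (-1 : ℝ) ^ (i : ℕ)

/-- Elementary upper bidiagonal corner-cutting matrix: identity except
entries (i,i) = 1-l and (i,i+1) = l (0-based indexing). -/
def Uel (n i : ℕ) (hi : i + 1 < n) (l : ℝ) : Matrix (Fin n) (Fin n) ℝ :=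
  Matrix.of fun r c =>
    if r = (⟨i, Nat.lt_of_succ_lt hi⟩ : Fin n) ∧ c = (⟨i, Nat.lt_of_succ_lt hi⟩ : Fin n) then 1 - l
    else if r = (⟨i, Nat.lt_of_succ_lt hi⟩ : Fin n) ∧ c = (⟨i + 1, hi⟩ : Fin n) then l
    else if r = c then 1 else 0

/-- Elementary lower bidiagonal corner-cutting matrix: identity except
entries (i+1,i) = l and (i+1,i+1) = 1-l (0-based indexing). -/
def Lel (n i : ℕ) (hi : i + 1 < n) (l : ℝ) : Matrix (Fin n) (Fin n) ℝ :=
  Matrix.of fun r c =>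
    if r = (⟨i + 1, hi⟩ : Fin n) ∧ c = (⟨i, Nat.lt_of_succ_lt hi⟩ : Fin n) then l
    else if r = (⟨i + 1, hi⟩ : Fin n) ∧ c = (⟨i + 1, hi⟩ : Fin n) then 1 - l
    else if r = c then 1 else 0

/-- Minimal (real) eigenvalue of a real square matrix. -/
noncomputable def minEig {n : ℕ} (A : Matrix (Fin n) (Fin n) ℝ) : ℝ :=
  sInf {μ : ℝ | (A - μ • (1 : Matrix (Fin n) (Fin n) ℝ)).det = 0}

/-- Minimal singular value: square root of the minimal eigenvalue of AᵀA. -/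
noncomputable def minSing {n : ℕ} (A : Matrix (Fin n) (Fin n) ℝ) : ℝ :=
  Real.sqrt (minEig (Aᵀ * A))

/-- Maximum absolute row sum norm. -/
noncomputable def normInf {n : ℕ} (A : Matrix (Fin n) (Fin n) ℝ) : ℝ :=
  ⨆ i, ∑ j, |A i j|

/-- Maximum absolute column sum norm. -/
noncomputable def norm1 {n : ℕ} (A : Matrix (Fin n) (Fin n) ℝ) : ℝ :=
  normInf Aᵀ

/-- Condition number in the ∞-norm. -/
noncomputable def condInf {n : ℕ} (A : Matrix (Fin n) (Fin n) ℝ) : ℝ :=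
  normInf A * normInf A⁻¹

/-- Condition number in the 1-norm. -/
noncomputable def cond1 {n : ℕ} (A : Matrix (Fin n) (Fin n) ℝ) : ℝ :=
  norm1 A * norm1 A⁻¹

/-- Spectral radius of a complex square matrix. -/
noncomputable def specRadC {n : ℕ} (A : Matrix (Fin n) (Fin n) ℂ) : ℝ :=
  sSup {x : ℝ | ∃ μ : ℂ, (A - μ • (1 : Matrix (Fin n) (Fin n) ℂ)).det = 0 ∧ x = ‖μ‖}

lemma totPos_entry {n : ℕ} {A : Matrix (Fin n) (Fin n) ℝ} (hA : TotPos A) (i j : Fin n) :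
    0 ≤ A i j := by
  have h := hA 1 (fun _ => i) (fun _ => j)
    (fun a b hab => absurd hab (by omega)) (fun a b hab => absurd hab (by omega))
  simpa [Matrix.det_fin_one] using h

lemma totPos_det {n : ℕ} {A : Matrix (Fin n) (Fin n) ℝ} (hA : TotPos A) : 0 ≤ A.det := by
  have h := hA n id id strictMono_id strictMono_id
  simpa using h

/-- Schur complement w.r.t. the (0,0) entry. -/
noncomputable def schur {k : ℕ} (A : Matrix (Fin (k+1)) (Fin (k+1)) ℝ) :
    Matrix (Fin k) (Fin k) ℝ :=
  Matrix.of fun r c => A r.succ c.succ - A r.succ 0 / A 0 0 * A 0 c.succ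

lemma det_schur {k : ℕ} (A : Matrix (Fin (k+1)) (Fin (k+1)) ℝ) (h : A 0 0 ≠ 0) :
    A.det = A 0 0 * (schur A).det := by
  classical
  set c : Fin (k+1) → ℝ := fun i => if i = 0 then 0 else -(A i 0 / A 0 0) with hc
  set N : Matrix (Fin (k+1)) (Fin (k+1)) ℝ :=
    Matrix.of fun i j => A i j + c i * A 0 j with hN
  have hdet : N.det = A.det := by
    apply Matrix.det_eq_of_forall_row_eq_smul_add_const c 0 (by simp [hc])
    intro i j
    simp [hN]
  have hN0 : ∀ i : Fin k, N i.succ 0 = 0 := by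
    intro i
    simp only [hN, hc, Matrix.of_apply]
    rw [if_neg (Fin.succ_ne_zero i)]
    field_simp
    ring
  have hNdet : N.det = N 0 0 * (N.submatrix Fin.succ Fin.succ).det := by
    rw [Matrix.det_succ_column_zero]
    rw [Fin.sum_univ_succ]
    simp only [Fin.val_zero, pow_zero, one_mul, Fin.succAbove_zero]
    have : ∀ i : Fin k, (-1 : ℝ) ^ ((i.succ : Fin (k+1)) : ℕ) * N i.succ 0 *
        (N.submatrix (Fin.succAbove i.succ) Fin.succ).det = 0 := by
      intro i; rw [hN0 i]; ring
    rw [Finset.sum_eq_zero fun i _ => this i, add_zero]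
  have hsub : N.submatrix Fin.succ Fin.succ = schur A := by
    ext r c'
    simp only [Matrix.submatrix_apply, hN, Matrix.of_apply, hc, schur]
    rw [if_neg (Fin.succ_ne_zero r)]
    ring
  have hN00 : N 0 0 = A 0 0 := by simp [hN, hc]
  rw [← hdet, hNdet, hsub, hN00]

lemma cons_strictMono {k m : ℕ} {r : Fin k → Fin m} (hr : StrictMono r) :
    StrictMono (Fin.cons 0 (Fin.succ ∘ r) : Fin (k+1) → Fin (m+1)) := by
  intro a b hab
  induction b using Fin.cases with
  | zero => exact absurd hab (by simp)
  | succ b =>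
    induction a using Fin.cases with
    | zero => simpa using Fin.succ_pos (r b)
    | succ a =>
      simp only [Fin.cons_succ, Function.comp_apply, Fin.succ_lt_succ_iff]
      exact hr (by simpa using hab)

lemma schur_totPos {m : ℕ} {A : Matrix (Fin (m+1)) (Fin (m+1)) ℝ} (hA : TotPos A)
    (h0 : 0 < A 0 0) : TotPos (schur A) := by
  intro k r c hr hc
  have key : (schur A).submatrix r c =
      schur (A.submatrix (Fin.cons 0 (Fin.succ ∘ r)) (Fin.cons 0 (Fin.succ ∘ c))) := by
    ext a b
    simp [schur, Matrix.submatrix_apply, Fin.cons_succ, Fin.cons_zero]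
  rw [key]
  set B := A.submatrix (Fin.cons 0 (Fin.succ ∘ r)) (Fin.cons 0 (Fin.succ ∘ c)) with hB
  have hB00 : B 0 0 = A 0 0 := by simp [hB]
  have hBdet : 0 ≤ B.det := hA (k+1) _ _ (cons_strictMono hr) (cons_strictMono hc)
  have hds := det_schur B (by rw [hB00]; exact ne_of_gt h0)
  have : (schur B).det = B.det / B 0 0 := by
    rw [hds]; field_simp [hB00, ne_of_gt h0]
  rw [this, hB00]
  positivity

section scratch
variable {n : ℕ}

lemma rev_totPos {A : Matrix (Fin n) (Fin n) ℝ} (hA : TotPos A) :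
    TotPos (A.submatrix Fin.rev Fin.rev) := by
  intro k r c hr hc
  have h1 : (A.submatrix Fin.rev Fin.rev).submatrix r c =
      (A.submatrix (fun a : Fin k => Fin.rev (r (Fin.rev a)))
        (fun a : Fin k => Fin.rev (c (Fin.rev a)))).submatrix Fin.revPerm Fin.revPerm := by
    ext a b
    simp [Fin.rev_rev]
  rw [h1, Matrix.det_submatrix_equiv_self]
  apply hA
  · intro a b hab
    exact Fin.rev_lt_rev.mpr (hr (Fin.rev_lt_rev.mpr (by simpa using hab)))
  · intro a b hab
    exact Fin.rev_lt_rev.mpr (hc (Fin.rev_lt_rev.mpr (by simpa using hab)))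

lemma strictMono_pair {m : ℕ} {x : Fin (m+1)} (hx : 0 < x) :
    StrictMono (![0, x] : Fin 2 → Fin (m+1)) := by
  intro a b hab
  fin_cases a <;> fin_cases b <;> simp_all <;> try exact hx

lemma corner_zero {m : ℕ} {A : Matrix (Fin (m+1)) (Fin (m+1)) ℝ} (hA : TotPos A)
    (h0 : A 0 0 = 0) : A.det = 0 := by
  classical
  have key : ∀ (i j : Fin (m+1)), 0 < i → 0 < j → A 0 j * A i 0 = 0 := by
    intro i j hi hj
    have h2 := hA 2 ![0, i] ![0, j] (strictMono_pair hi) (strictMono_pair hj)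
    rw [Matrix.det_fin_two] at h2
    simp only [Matrix.submatrix_apply] at h2
    have e00 : (![0, i] : Fin 2 → Fin (m+1)) 0 = 0 := rfl
    have e1 : (![0, i] : Fin 2 → Fin (m+1)) 1 = i := rfl
    have f00 : (![0, j] : Fin 2 → Fin (m+1)) 0 = 0 := rfl
    have f1 : (![0, j] : Fin 2 → Fin (m+1)) 1 = j := rfl
    rw [e00, e1, f00, f1, h0, zero_mul] at h2
    have hnn : 0 ≤ A 0 j * A i 0 := by
      have h1 := hA 1 (fun _ => (0:Fin (m+1))) (fun _ => j)
        (fun a b hab => absurd hab (by omega)) (fun a b hab => absurd hab (by omega))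
      have h1' := hA 1 (fun _ => i) (fun _ => (0:Fin (m+1)))
        (fun a b hab => absurd hab (by omega)) (fun a b hab => absurd hab (by omega))
      simp only [Matrix.det_fin_one, Matrix.submatrix_apply] at h1 h1'
      exact mul_nonneg h1 h1'
    linarith
  by_cases hcol : ∀ i, A i 0 = 0
  · exact Matrix.det_eq_zero_of_column_eq_zero 0 hcol
  · push_neg at hcol
    obtain ⟨i, hi⟩ := hcol
    have hipos : 0 < i := by
      rcases Fin.eq_zero_or_eq_succ i with h | ⟨j, rfl⟩
      · exact absurd (h ▸ h0) hi
      · exact Fin.succ_pos j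
    apply Matrix.det_eq_zero_of_row_eq_zero 0
    intro j
    rcases Fin.eq_zero_or_eq_succ j with h | ⟨j', rfl⟩
    · rw [h]; exact h0
    · have := key i j'.succ hipos (Fin.succ_pos j')
      rcases mul_eq_zero.mp this with h | h
      · exact h
      · exact absurd h hi

end scratch

lemma totPos_submatrix {n k : ℕ} {A : Matrix (Fin n) (Fin n) ℝ} (hA : TotPos A)
    {f g : Fin k → Fin n} (hf : StrictMono f) (hg : StrictMono g) :
    TotPos (A.submatrix f g) := by
  intro k' r c hr hc
  have : (A.submatrix f g).submatrix r c = A.submatrix (f ∘ r) (g ∘ c) := rfl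
  rw [this]
  exact hA k' _ _ (hf.comp hr) (hg.comp hc)

lemma fischer : ∀ (m : ℕ) (A : Matrix (Fin (m+1)) (Fin (m+1)) ℝ), TotPos A →
    ∀ i : Fin (m+1), A.det ≤ A i i * (A.submatrix i.succAbove i.succAbove).det := by
  intro m
  induction m with
  | zero =>
    intro A _ i
    have : i = 0 := Fin.fin_one_eq_zero i
    subst this
    rw [Matrix.det_fin_one]
    have : (A.submatrix (Fin.succAbove 0) (Fin.succAbove 0)).det = 1 :=
      Matrix.det_fin_zero
    rw [this, mul_one]
  | succ m ih =>
    -- first the case i = j.succ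
    have succCase : ∀ (A : Matrix (Fin (m+2)) (Fin (m+2)) ℝ), TotPos A →
        ∀ j : Fin (m+1), A.det ≤ A j.succ j.succ *
          (A.submatrix (Fin.succAbove j.succ) (Fin.succAbove j.succ)).det := by
      intro A hA j
      set i := j.succ with hi
      have hminorTP : TotPos (A.submatrix i.succAbove i.succAbove) :=
        totPos_submatrix hA (Fin.strictMono_succAbove i) (Fin.strictMono_succAbove i)
      by_cases h00 : A 0 0 = 0
      · rw [corner_zero hA h00]
        exact mul_nonneg (totPos_entry hA i i) (totPos_det hminorTP)
      · have h00pos : 0 < A 0 0 := lt_of_le_of_ne (totPos_entry hA 0 0) (Ne.symm h00)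
        set S := schur A with hS
        have hSTP : TotPos S := schur_totPos hA h00pos
        have hIH := ih S hSTP j
        have hdetA : A.det = A 0 0 * S.det := det_schur A h00
        -- the minor's Schur complement
        have hsub00 : (A.submatrix i.succAbove i.succAbove) 0 0 = A 0 0 := by
          simp [hi, Matrix.submatrix_apply, Fin.succ_succAbove_zero]
        have hkey : S.submatrix j.succAbove j.succAbove =
            schur (A.submatrix i.succAbove i.succAbove) := by
          ext a b
          simp only [Matrix.submatrix_apply, hS, schur, Matrix.of_apply, hi,
            Fin.succ_succAbove_succ, Fin.succ_succAbove_zero]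
        have hdetMinor : (A.submatrix i.succAbove i.succAbove).det =
            A 0 0 * (S.submatrix j.succAbove j.succAbove).det := by
          rw [hkey]
          rw [det_schur _ (by rw [hsub00]; exact h00), hsub00]
        have hSjj : S j j ≤ A i i := by
          simp only [hS, schur, Matrix.of_apply, ← hi]
          have : 0 ≤ A i 0 / A 0 0 * A 0 i :=
            mul_nonneg (div_nonneg (totPos_entry hA i 0) h00pos.le) (totPos_entry hA 0 i)
          linarith
        have hminor2 : 0 ≤ (S.submatrix j.succAbove j.succAbove).det :=
          totPos_det (totPos_submatrix hSTP (Fin.strictMono_succAbove j)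
            (Fin.strictMono_succAbove j))
        calc A.det = A 0 0 * S.det := hdetA
          _ ≤ A 0 0 * (S j j * (S.submatrix j.succAbove j.succAbove).det) := by
              exact mul_le_mul_of_nonneg_left hIH h00pos.le
          _ ≤ A 0 0 * (A i i * (S.submatrix j.succAbove j.succAbove).det) := by
              apply mul_le_mul_of_nonneg_left _ h00pos.le
              exact mul_le_mul_of_nonneg_right hSjj hminor2
          _ = A i i * (A 0 0 * (S.submatrix j.succAbove j.succAbove).det) := by ring
          _ = A i i * (A.submatrix i.succAbove i.succAbove).det := by rw [← hdetMinor]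
    intro A hA i
    rcases Fin.eq_zero_or_eq_succ i with h | ⟨j, rfl⟩
    · subst h
      -- use reversal
      set A' := A.submatrix (Fin.rev : Fin (m+2) → Fin (m+2)) Fin.rev with hA'
      have hA'TP : TotPos A' := rev_totPos hA
      have h1 := succCase A' hA'TP (Fin.last m)
      have hlast : (Fin.last m).succ = Fin.last (m+1) := Fin.succ_last m
      have hdets : A'.det = A.det := by
        have : A' = A.submatrix (Fin.revPerm : Equiv.Perm (Fin (m+2))) Fin.revPerm := rfl
        rw [this, Matrix.det_submatrix_equiv_self]
      have hdiag : A' (Fin.last m).succ (Fin.last m).succ = A 0 0 := by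
        rw [hlast]; simp [hA', Matrix.submatrix_apply, Fin.rev_last]
      have hminor : A'.submatrix (Fin.succAbove (Fin.last m).succ)
          (Fin.succAbove (Fin.last m).succ) =
          (A.submatrix (Fin.succ : Fin (m+1) → Fin (m+2)) Fin.succ).submatrix
            (Fin.rev : Fin (m+1) → Fin (m+1)) Fin.rev := by
        ext a b
        simp only [Matrix.submatrix_apply, hA', hlast, Fin.succAbove_last,
          Fin.rev_castSucc]
      have hminordet : (A'.submatrix (Fin.succAbove (Fin.last m).succ)
          (Fin.succAbove (Fin.last m).succ)).det =
          (A.submatrix (Fin.succAbove (0 : Fin (m+2))) (Fin.succAbove 0)).det := by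
        rw [hminor]
        have h2 : (A.submatrix (Fin.succ : Fin (m+1) → Fin (m+2)) Fin.succ).submatrix
            (Fin.rev : Fin (m+1) → Fin (m+1)) Fin.rev =
            (A.submatrix (Fin.succ : Fin (m+1) → Fin (m+2)) Fin.succ).submatrix
            (Fin.revPerm : Equiv.Perm (Fin (m+1))) Fin.revPerm := rfl
        rw [h2, Matrix.det_submatrix_equiv_self]
        congr 1
      rw [← hdets]
      calc A'.det ≤ A' (Fin.last m).succ (Fin.last m).succ *
            (A'.submatrix (Fin.last m).succ.succAbove (Fin.last m).succ.succAbove).det := h1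
        _ = A 0 0 * (A.submatrix (Fin.succAbove (0:Fin (m+2))) (Fin.succAbove 0)).det := by
            rw [hdiag, hminordet]
    · exact succCase A hA j

lemma totPos_det_pos {n : ℕ} {A : Matrix (Fin n) (Fin n) ℝ} (hA : TotPos A)
    (hU : IsUnit A.det) : 0 < A.det :=
  lt_of_le_of_ne (totPos_det hA) (Ne.symm (IsUnit.ne_zero hU))

lemma inv_entry {m : ℕ} (A : Matrix (Fin (m+1)) (Fin (m+1)) ℝ) (i j : Fin (m+1)) :
    A⁻¹ i j = (A.det)⁻¹ *
      ((-1 : ℝ) ^ ((j : ℕ) + (i : ℕ)) * (A.submatrix j.succAbove i.succAbove).det) := by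
  rw [Matrix.inv_def, ← Matrix.adjugate_fin_succ_eq_det_submatrix]
  simp [Ring.inverse_eq_inv']

lemma inv_checkerboard {m : ℕ} {A : Matrix (Fin (m+1)) (Fin (m+1)) ℝ} (hA : TotPos A)
    (hU : IsUnit A.det) (i j : Fin (m+1)) :
    0 ≤ (-1 : ℝ) ^ ((i : ℕ) + (j : ℕ)) * A⁻¹ i j := by
  rw [inv_entry]
  have h1 : (-1 : ℝ) ^ ((i:ℕ) + (j:ℕ)) * ((A.det)⁻¹ *
      ((-1 : ℝ) ^ ((j:ℕ) + (i:ℕ)) * (A.submatrix j.succAbove i.succAbove).det)) =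
      (((-1 : ℝ) ^ ((i:ℕ) + (j:ℕ)))^2) * ((A.det)⁻¹ *
        (A.submatrix j.succAbove i.succAbove).det) := by
    rw [add_comm (j:ℕ) (i:ℕ)]; ring
  rw [h1]
  have h2 : (((-1 : ℝ) ^ ((i:ℕ) + (j:ℕ)))^2) = 1 := by
    rw [← pow_mul, mul_comm, pow_mul]; norm_num
  rw [h2, one_mul]
  have h3 : 0 ≤ (A.submatrix j.succAbove i.succAbove).det :=
    hA m _ _ (Fin.strictMono_succAbove j) (Fin.strictMono_succAbove i)
  exact mul_nonneg (inv_nonneg.mpr (totPos_det_pos hA hU).le) h3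

lemma inv_diag_ge_one {m : ℕ} {K : Matrix (Fin (m+1)) (Fin (m+1)) ℝ} (hK : TotPos K)
    (hKs : RowStoch K) (hU : IsUnit K.det) (i : Fin (m+1)) : 1 ≤ K⁻¹ i i := by
  rw [inv_entry]
  have hsign : (-1 : ℝ) ^ ((i:ℕ) + (i:ℕ)) = 1 := by
    rw [← two_mul, pow_mul]; norm_num
  rw [hsign, one_mul]
  have hdet : 0 < K.det := totPos_det_pos hK hU
  have hKii : K i i ≤ 1 := by
    rw [← hKs.2 i]
    exact Finset.single_le_sum (fun j _ => hKs.1 i j) (Finset.mem_univ i)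
  have hminor : 0 ≤ (K.submatrix i.succAbove i.succAbove).det :=
    hK m _ _ (Fin.strictMono_succAbove i) (Fin.strictMono_succAbove i)
  have hF := fischer m K hK i
  have : K.det ≤ (K.submatrix i.succAbove i.succAbove).det := by
    calc K.det ≤ K i i * (K.submatrix i.succAbove i.succAbove).det := hF
      _ ≤ 1 * (K.submatrix i.succAbove i.succAbove).det :=
          mul_le_mul_of_nonneg_right hKii hminor
      _ = _ := one_mul _
  calc (1:ℝ) ≤ (K.submatrix i.succAbove i.succAbove).det / K.det := by
        rw [le_div_iff₀ hdet]; linarith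
    _ = (K.det)⁻¹ * (K.submatrix i.succAbove i.succAbove).det := by ring

/-- Key vector inequality: `‖K⁻¹ (Jw)‖ ≥ ‖w‖` for nonnegative `w`. -/
lemma key_vec {m : ℕ} {K : Matrix (Fin (m+1)) (Fin (m+1)) ℝ} (hK : TotPos K)
    (hKs : RowStoch K) (hU : IsUnit K.det) (w : Fin (m+1) → ℝ) (hw : ∀ c, 0 ≤ w c) :
    ∑ r, (w r)^2 ≤ ∑ r, ((K⁻¹ *ᵥ fun c => (-1 : ℝ)^(c:ℕ) * w c) r)^2 := by
  apply Finset.sum_le_sum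
  intro r _
  set x := (K⁻¹ *ᵥ fun c => (-1 : ℝ)^(c:ℕ) * w c) r with hx
  have hexp : (-1:ℝ)^(r:ℕ) * x = ∑ c : Fin (m+1), ((-1:ℝ)^((r:ℕ)+(c:ℕ)) * K⁻¹ r c) * w c := by
    rw [hx, Matrix.mulVec, dotProduct, Finset.mul_sum]
    apply Finset.sum_congr rfl
    intro c _
    rw [pow_add]; ring
  have hterm : ∀ c : Fin (m+1), 0 ≤ ((-1:ℝ)^((r:ℕ)+(c:ℕ)) * K⁻¹ r c) * w c := fun c =>
    mul_nonneg (inv_checkerboard hK hU r c) (hw c)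
  have hge : w r ≤ (-1:ℝ)^(r:ℕ) * x := by
    rw [hexp]
    calc w r ≤ ((-1:ℝ)^((r:ℕ)+(r:ℕ)) * K⁻¹ r r) * w r := by
          have hsign : (-1 : ℝ) ^ ((r:ℕ) + (r:ℕ)) = 1 := by
            rw [← two_mul, pow_mul]; norm_num
          rw [hsign, one_mul]
          nlinarith [inv_diag_ge_one hK hKs hU r, hw r]
      _ ≤ ∑ c : Fin (m+1), ((-1:ℝ)^((r:ℕ)+(c:ℕ)) * K⁻¹ r c) * w c :=
          Finset.single_le_sum (fun c _ => hterm c) (Finset.mem_univ r)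
  calc (w r)^2 ≤ ((-1:ℝ)^(r:ℕ) * x)^2 := by
        apply pow_le_pow_left₀ (hw r) hge
    _ = x^2 := by
        rw [mul_pow, ← pow_mul, mul_comm (r:ℕ) 2, pow_mul]; norm_num

section spectral
variable {m : ℕ}

lemma inner_eq_dot {k : ℕ} (x y : EuclideanSpace ℝ (Fin k)) :
    (inner ℝ x y : ℝ) = (⇑x) ⬝ᵥ (⇑y) := by
  simp [PiLp.inner_apply, RCLike.inner_apply, conj_trivial, dotProduct, mul_comm]

lemma sum_smul_dot {k k2 : ℕ} (c : Fin k → ℝ) (v : Fin k → Fin k2 → ℝ) (w : Fin k2 → ℝ) :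
    (∑ i, c i • v i) ⬝ᵥ w = ∑ i, c i * (v i ⬝ᵥ w) := by
  simp only [dotProduct, Finset.sum_apply, Pi.smul_apply, smul_eq_mul,
    Finset.sum_mul, Finset.mul_sum]
  rw [Finset.sum_comm]
  apply Finset.sum_congr rfl; intro i _
  apply Finset.sum_congr rfl; intro j _
  ring

lemma dot_sum_smul {k k2 : ℕ} (c : Fin k → ℝ) (v : Fin k → Fin k2 → ℝ) (w : Fin k2 → ℝ) :
    w ⬝ᵥ (∑ i, c i • v i) = ∑ i, c i * (w ⬝ᵥ v i) := by
  rw [dotProduct_comm, sum_smul_dot]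
  simp_rw [dotProduct_comm w]

variable {P : Matrix (Fin (m+1)) (Fin (m+1)) ℝ} (hP : P.IsHermitian)

lemma evec_orth (i j : Fin (m+1)) :
    (⇑(hP.eigenvectorBasis i) : Fin (m+1) → ℝ) ⬝ᵥ ⇑(hP.eigenvectorBasis j) =
      if i = j then 1 else 0 := by
  rw [← inner_eq_dot]
  exact orthonormal_iff_ite.mp hP.eigenvectorBasis.orthonormal i j

lemma exists_coef (x : Fin (m+1) → ℝ) :
    ∃ c : Fin (m+1) → ℝ, x = ∑ i, c i • (⇑(hP.eigenvectorBasis i) : Fin (m+1) → ℝ) := by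
  set X : EuclideanSpace ℝ (Fin (m+1)) := WithLp.toLp 2 x with hX
  refine ⟨fun i => hP.eigenvectorBasis.repr X i, ?_⟩
  have h := hP.eigenvectorBasis.sum_repr X
  have h2 : (⇑(∑ i, hP.eigenvectorBasis.repr X i • hP.eigenvectorBasis i) :
      Fin (m+1) → ℝ) = ∑ i, hP.eigenvectorBasis.repr X i • ⇑(hP.eigenvectorBasis i) := by
    simp only [WithLp.ofLp_sum, WithLp.ofLp_smul]
  rw [← h2, h]

lemma dot_self_eq (c : Fin (m+1) → ℝ)
    (x : Fin (m+1) → ℝ)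
    (hx : x = ∑ i, c i • (⇑(hP.eigenvectorBasis i) : Fin (m+1) → ℝ)) :
    x ⬝ᵥ x = ∑ i, (c i)^2 := by
  rw [hx, sum_smul_dot]
  apply Finset.sum_congr rfl
  intro i _
  rw [dot_sum_smul]
  rw [Finset.sum_eq_single i]
  · rw [evec_orth hP i i, if_pos rfl]; ring
  · intro j _ hji
    rw [evec_orth hP i j, if_neg (Ne.symm hji)]; ring
  · intro h; exact absurd (Finset.mem_univ i) h

lemma dot_mulVec_eq (c : Fin (m+1) → ℝ)
    (x : Fin (m+1) → ℝ)
    (hx : x = ∑ i, c i • (⇑(hP.eigenvectorBasis i) : Fin (m+1) → ℝ)) :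
    x ⬝ᵥ (P *ᵥ x) = ∑ i, hP.eigenvalues i * (c i)^2 := by
  have hPx : P *ᵥ x = ∑ i, (c i * hP.eigenvalues i) •
      (⇑(hP.eigenvectorBasis i) : Fin (m+1) → ℝ) := by
    rw [hx]
    have : P *ᵥ (∑ i, c i • (⇑(hP.eigenvectorBasis i) : Fin (m+1) → ℝ)) =
        ∑ i, c i • (P *ᵥ ⇑(hP.eigenvectorBasis i)) := by
      rw [← Matrix.mulVecLin_apply, map_sum]
      simp [Matrix.mulVecLin_apply, Matrix.mulVec_smul]
    rw [this]
    apply Finset.sum_congr rfl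
    intro i _
    rw [hP.mulVec_eigenvectorBasis, smul_smul]
  rw [hPx, hx, sum_smul_dot]
  apply Finset.sum_congr rfl
  intro i _
  rw [dot_sum_smul]
  rw [Finset.sum_eq_single i]
  · rw [evec_orth hP i i, if_pos rfl]; ring
  · intro j _ hji
    rw [evec_orth hP i j, if_neg (Ne.symm hji)]; ring
  · intro h; exact absurd (Finset.mem_univ i) h

lemma evec_ne_zero (i : Fin (m+1)) :
    (⇑(hP.eigenvectorBasis i) : Fin (m+1) → ℝ) ≠ 0 := by
  intro h
  have h1 : (⇑(hP.eigenvectorBasis i) : Fin (m+1) → ℝ) ⬝ᵥ ⇑(hP.eigenvectorBasis i) = 1 := by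
    rw [evec_orth hP i i, if_pos rfl]
  rw [h] at h1
  simp [dotProduct] at h1

lemma eig_mem_Z (i : Fin (m+1)) :
    (P - hP.eigenvalues i • (1 : Matrix (Fin (m+1)) (Fin (m+1)) ℝ)).det = 0 := by
  rw [← Matrix.exists_mulVec_eq_zero_iff]
  refine ⟨⇑(hP.eigenvectorBasis i), evec_ne_zero hP i, ?_⟩
  rw [Matrix.sub_mulVec, Matrix.smul_mulVec, Matrix.one_mulVec,
    hP.mulVec_eigenvectorBasis, sub_self]

lemma Z_mem_eig {μ : ℝ}
    (h : (P - μ • (1 : Matrix (Fin (m+1)) (Fin (m+1)) ℝ)).det = 0) :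
    ∃ i, hP.eigenvalues i = μ := by
  by_contra hc
  push_neg at hc
  rw [← Matrix.exists_mulVec_eq_zero_iff] at h
  obtain ⟨v, hv, hPv⟩ := h
  rw [Matrix.sub_mulVec, Matrix.smul_mulVec, Matrix.one_mulVec, sub_eq_zero] at hPv
  obtain ⟨c, hcv⟩ := exists_coef hP v
  apply hv
  have hcoef : ∀ j, c j = 0 := by
    intro j
    have h1 : (⇑(hP.eigenvectorBasis j) : Fin (m+1) → ℝ) ⬝ᵥ (P *ᵥ v) =
        hP.eigenvalues j * c j := by
      have hsym : (⇑(hP.eigenvectorBasis j) : Fin (m+1) → ℝ) ⬝ᵥ (P *ᵥ v) =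
          (P *ᵥ ⇑(hP.eigenvectorBasis j)) ⬝ᵥ v := by
        have hPT : Pᵀ = P := by
          have := hP.eq
          rwa [Matrix.conjTranspose_eq_transpose_of_trivial] at this
        rw [dotProduct_mulVec, ← Matrix.mulVec_transpose, hPT]
      rw [hsym, hP.mulVec_eigenvectorBasis, smul_dotProduct]
      rw [hcv, dot_sum_smul, Finset.sum_eq_single j]
      · rw [evec_orth hP j j, if_pos rfl]; simp [smul_eq_mul]
      · intro b _ hbj
        rw [evec_orth hP j b, if_neg (Ne.symm hbj)]; ring
      · intro hj; exact absurd (Finset.mem_univ j) hj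
    have h2 : (⇑(hP.eigenvectorBasis j) : Fin (m+1) → ℝ) ⬝ᵥ (μ • v) = μ * c j := by
      rw [dotProduct_smul, hcv, dot_sum_smul, Finset.sum_eq_single j]
      · rw [evec_orth hP j j, if_pos rfl]; simp [smul_eq_mul]
      · intro b _ hbj
        rw [evec_orth hP j b, if_neg (Ne.symm hbj)]; ring
      · intro hj; exact absurd (Finset.mem_univ j) hj
    rw [hPv] at h1
    rw [h1] at h2
    rcases mul_eq_mul_right_iff.mp h2 with h | h
    · exact absurd h (hc j)
    · exact h
  rw [hcv]
  apply Finset.sum_eq_zero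
  intro j _
  rw [hcoef j, zero_smul]

lemma minEig_eq_inf' : minEig P = Finset.univ.inf' Finset.univ_nonempty hP.eigenvalues := by
  unfold minEig
  apply le_antisymm
  · obtain ⟨i, -, hi⟩ := Finset.exists_mem_eq_inf' Finset.univ_nonempty hP.eigenvalues
    rw [hi]
    apply csInf_le
    · refine BddBelow.mono ?_ (Set.finite_range hP.eigenvalues).bddBelow
      intro μ hμ
      obtain ⟨j, hj⟩ := Z_mem_eig hP hμ
      exact ⟨j, hj⟩
    · exact eig_mem_Z hP i
  · apply le_csInf
    · exact ⟨_, eig_mem_Z hP 0⟩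
    · intro μ hμ
      obtain ⟨j, hj⟩ := Z_mem_eig hP hμ
      rw [← hj]
      exact Finset.inf'_le _ (Finset.mem_univ j)

end spectral

section spectral2
variable {m : ℕ} {P : Matrix (Fin (m+1)) (Fin (m+1)) ℝ} (hP : P.IsHermitian)

lemma mulVec_coef (c : Fin (m+1) → ℝ) (x : Fin (m+1) → ℝ)
    (hx : x = ∑ i, c i • (⇑(hP.eigenvectorBasis i) : Fin (m+1) → ℝ)) :
    P *ᵥ x = ∑ i, (c i * hP.eigenvalues i) •
      (⇑(hP.eigenvectorBasis i) : Fin (m+1) → ℝ) := by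
  rw [hx]
  have : P *ᵥ (∑ i, c i • (⇑(hP.eigenvectorBasis i) : Fin (m+1) → ℝ)) =
      ∑ i, c i • (P *ᵥ ⇑(hP.eigenvectorBasis i)) := by
    rw [← Matrix.mulVecLin_apply, map_sum]
    simp [Matrix.mulVecLin_apply, Matrix.mulVec_smul]
  rw [this]
  apply Finset.sum_congr rfl
  intro i _
  rw [hP.mulVec_eigenvectorBasis, smul_smul]

lemma rayleigh_le (x : Fin (m+1) → ℝ) :
    (Finset.univ.inf' Finset.univ_nonempty hP.eigenvalues) * (x ⬝ᵥ x) ≤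
      x ⬝ᵥ (P *ᵥ x) := by
  obtain ⟨c, hx⟩ := exists_coef hP x
  rw [dot_self_eq hP c x hx, dot_mulVec_eq hP c x hx, Finset.mul_sum]
  apply Finset.sum_le_sum
  intro i _
  exact mul_le_mul_of_nonneg_right (Finset.inf'_le _ (Finset.mem_univ i)) (sq_nonneg _)

lemma le_rayleigh (x : Fin (m+1) → ℝ) :
    x ⬝ᵥ (P *ᵥ x) ≤ (Finset.univ.sup' Finset.univ_nonempty hP.eigenvalues) * (x ⬝ᵥ x) := by
  obtain ⟨c, hx⟩ := exists_coef hP x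
  rw [dot_self_eq hP c x hx, dot_mulVec_eq hP c x hx, Finset.mul_sum]
  apply Finset.sum_le_sum
  intro i _
  exact mul_le_mul_of_nonneg_right (Finset.le_sup' _ (Finset.mem_univ i)) (sq_nonneg _)

lemma rayleigh_eq_sup (x : Fin (m+1) → ℝ)
    (heq : x ⬝ᵥ (P *ᵥ x) =
      (Finset.univ.sup' Finset.univ_nonempty hP.eigenvalues) * (x ⬝ᵥ x)) :
    P *ᵥ x = (Finset.univ.sup' Finset.univ_nonempty hP.eigenvalues) • x := by
  obtain ⟨c, hx⟩ := exists_coef hP x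
  set τ := Finset.univ.sup' Finset.univ_nonempty hP.eigenvalues with hτ
  have h1 : ∑ i, (τ - hP.eigenvalues i) * (c i)^2 = 0 := by
    have e1 : ∑ i, (τ - hP.eigenvalues i) * (c i)^2 =
        τ * (∑ i, (c i)^2) - ∑ i, hP.eigenvalues i * (c i)^2 := by
      rw [Finset.mul_sum, ← Finset.sum_sub_distrib]
      apply Finset.sum_congr rfl; intro i _; ring
    rw [e1, ← dot_self_eq hP c x hx, ← dot_mulVec_eq hP c x hx, heq, sub_self]
  have h2 : ∀ i ∈ Finset.univ, (0:ℝ) ≤ (τ - hP.eigenvalues i) * (c i)^2 := by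
    intro i _
    apply mul_nonneg _ (sq_nonneg _)
    rw [sub_nonneg]
    exact Finset.le_sup' _ (Finset.mem_univ i)
  have h3 := (Finset.sum_eq_zero_iff_of_nonneg h2).mp h1
  rw [mulVec_coef hP c x hx, hx, Finset.smul_sum]
  apply Finset.sum_congr rfl
  intro i _
  rw [smul_smul]
  congr 1
  have := h3 i (Finset.mem_univ i)
  rcases mul_eq_zero.mp this with h | h
  · rw [sub_eq_zero] at h
    rw [← h]; ring
  · rw [pow_eq_zero_iff (by norm_num : 2 ≠ 0)] at h
    rw [h]; ring

lemma inf'_pos (hpd : ∀ x : Fin (m+1) → ℝ, x ≠ 0 → 0 < x ⬝ᵥ (P *ᵥ x)) :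
    0 < Finset.univ.inf' Finset.univ_nonempty hP.eigenvalues := by
  obtain ⟨i, -, hi⟩ := Finset.exists_mem_eq_inf' Finset.univ_nonempty hP.eigenvalues
  rw [hi]
  have h := hpd _ (evec_ne_zero hP i)
  rw [hP.mulVec_eigenvectorBasis, dotProduct_smul, smul_eq_mul,
    evec_orth hP i i, if_pos rfl, mul_one] at h
  exact h

end spectral2
section assembly
variable {m : ℕ}

lemma herm_tmul (A : Matrix (Fin (m+1)) (Fin (m+1)) ℝ) : (Aᵀ * A).IsHermitian := by
  rw [Matrix.IsHermitian, Matrix.conjTranspose_eq_transpose_of_trivial,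
    Matrix.transpose_mul, Matrix.transpose_transpose]

lemma smul_cancel_inv {a : ℝ} (ha : a ≠ 0) {k : ℕ} {x y : Fin k → ℝ}
    (h : a • x = y) : x = a⁻¹ • y := by
  rw [← h, smul_smul, inv_mul_cancel₀ ha, one_smul]

lemma dot_self_nonneg (v : Fin (m+1) → ℝ) : 0 ≤ v ⬝ᵥ v :=
  Finset.sum_nonneg fun i _ => mul_self_nonneg (v i)

lemma dot_self_pos {v : Fin (m+1) → ℝ} (hv : v ≠ 0) : 0 < v ⬝ᵥ v := by
  rcases lt_or_eq_of_le (dot_self_nonneg v) with h | h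
  · exact h
  · exact absurd (dotProduct_self_eq_zero.mp h.symm) hv

lemma mulVec_ne_zero {A : Matrix (Fin (m+1)) (Fin (m+1)) ℝ} (hU : IsUnit A.det)
    {x : Fin (m+1) → ℝ} (hx : x ≠ 0) : A *ᵥ x ≠ 0 := by
  intro h
  apply hx
  have : A⁻¹ *ᵥ (A *ᵥ x) = x := by
    rw [Matrix.mulVec_mulVec, Matrix.nonsing_inv_mul _ hU, Matrix.one_mulVec]
  rw [h, Matrix.mulVec_zero] at this
  exact this.symm

lemma dot_tmul (A : Matrix (Fin (m+1)) (Fin (m+1)) ℝ) (x : Fin (m+1) → ℝ) :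
    x ⬝ᵥ ((Aᵀ * A) *ᵥ x) = (A *ᵥ x) ⬝ᵥ (A *ᵥ x) := by
  rw [← Matrix.mulVec_mulVec, dotProduct_mulVec, ← Matrix.vecMul_transpose]

lemma tmul_pd {A : Matrix (Fin (m+1)) (Fin (m+1)) ℝ} (hU : IsUnit A.det) :
    ∀ x : Fin (m+1) → ℝ, x ≠ 0 → 0 < x ⬝ᵥ ((Aᵀ * A) *ᵥ x) := by
  intro x hx
  rw [dot_tmul]
  exact dot_self_pos (mulVec_ne_zero hU hx)

lemma det_tmul_unit {A : Matrix (Fin (m+1)) (Fin (m+1)) ℝ} (hU : IsUnit A.det) :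
    IsUnit (Aᵀ * A).det := by
  rw [Matrix.det_mul, Matrix.det_transpose]
  exact hU.mul hU

/-- There is a minimal eigenvector of `MᵀM` with alternating signs. -/
lemma evec_alt {M : Matrix (Fin (m+1)) (Fin (m+1)) ℝ} (hM : TotPos M)
    (hMns : IsUnit M.det) :
    ∃ v : Fin (m+1) → ℝ, v ≠ 0 ∧ (∀ c, v c = (-1 : ℝ)^(c:ℕ) * |v c|) ∧
      (Mᵀ * M) *ᵥ v = minEig (Mᵀ * M) • v := by
  set S := Mᵀ * M with hSdef
  have hS : S.IsHermitian := herm_tmul M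
  have hSdet : IsUnit S.det := det_tmul_unit hMns
  set lam := Finset.univ.inf' Finset.univ_nonempty hS.eigenvalues with hlam
  have hminEig : minEig S = lam := minEig_eq_inf' hS
  have hlampos : 0 < lam := inf'_pos hS (tmul_pd hMns)
  obtain ⟨i, -, hi⟩ := Finset.exists_mem_eq_inf' Finset.univ_nonempty hS.eigenvalues
  set v₀ : Fin (m+1) → ℝ := ⇑(hS.eigenvectorBasis i) with hv₀
  have hv₀ne : v₀ ≠ 0 := evec_ne_zero hS i
  have hSv₀ : S *ᵥ v₀ = lam • v₀ := by
    rw [hv₀, hS.mulVec_eigenvectorBasis, ← hi, ← hlam]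
  set P := S⁻¹ with hPdef
  have hP : P.IsHermitian := hS.inv
  have hPv₀ : P *ᵥ v₀ = lam⁻¹ • v₀ := by
    have h1 : P *ᵥ (S *ᵥ v₀) = v₀ := by
      rw [Matrix.mulVec_mulVec, hPdef, Matrix.nonsing_inv_mul _ hSdet, Matrix.one_mulVec]
    rw [hSv₀, Matrix.mulVec_smul] at h1
    exact smul_cancel_inv (ne_of_gt hlampos) h1
  set tau := Finset.univ.sup' Finset.univ_nonempty hP.eigenvalues with htau
  -- tau = lam⁻¹
  have htaueq : tau = lam⁻¹ := by
    apply le_antisymm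
    · obtain ⟨i₀, -, hi₀⟩ := Finset.exists_mem_eq_sup' Finset.univ_nonempty hP.eigenvalues
      set u : Fin (m+1) → ℝ := ⇑(hP.eigenvectorBasis i₀) with hu
      have hPu : P *ᵥ u = tau • u := by
        rw [hu, hP.mulVec_eigenvectorBasis, ← hi₀, ← htau]
      have htaupos : 0 < tau := by
        have h2 : lam⁻¹ ≤ tau := by
          have hz : (P - lam⁻¹ • (1 : Matrix (Fin (m+1)) (Fin (m+1)) ℝ)).det = 0 := by
            rw [← Matrix.exists_mulVec_eq_zero_iff]
            exact ⟨v₀, hv₀ne, by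
              rw [Matrix.sub_mulVec, Matrix.smul_mulVec, Matrix.one_mulVec, hPv₀,
                sub_self]⟩
          obtain ⟨j, hj⟩ := Z_mem_eig hP hz
          rw [← hj]
          exact Finset.le_sup' _ (Finset.mem_univ j)
        exact lt_of_lt_of_le (inv_pos.mpr hlampos) h2
      have hSu : S *ᵥ u = tau⁻¹ • u := by
        have h1 : S *ᵥ (P *ᵥ u) = u := by
          rw [Matrix.mulVec_mulVec, hPdef, Matrix.mul_nonsing_inv _ hSdet, Matrix.one_mulVec]
        rw [hPu, Matrix.mulVec_smul] at h1
        exact smul_cancel_inv (ne_of_gt htaupos) h1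
      have hz : (S - tau⁻¹ • (1 : Matrix (Fin (m+1)) (Fin (m+1)) ℝ)).det = 0 := by
        rw [← Matrix.exists_mulVec_eq_zero_iff]
        exact ⟨u, evec_ne_zero hP i₀, by
          rw [Matrix.sub_mulVec, Matrix.smul_mulVec, Matrix.one_mulVec, hSu, sub_self]⟩
      obtain ⟨j, hj⟩ := Z_mem_eig hS hz
      have : lam ≤ tau⁻¹ := by
        rw [← hj]; exact Finset.inf'_le _ (Finset.mem_univ j)
      calc tau = (tau⁻¹)⁻¹ := (inv_inv tau).symm
        _ ≤ lam⁻¹ := by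
            apply inv_anti₀ hlampos this
    · have hz : (P - lam⁻¹ • (1 : Matrix (Fin (m+1)) (Fin (m+1)) ℝ)).det = 0 := by
        rw [← Matrix.exists_mulVec_eq_zero_iff]
        exact ⟨v₀, hv₀ne, by
          rw [Matrix.sub_mulVec, Matrix.smul_mulVec, Matrix.one_mulVec, hPv₀, sub_self]⟩
      obtain ⟨j, hj⟩ := Z_mem_eig hP hz
      rw [← hj]
      exact Finset.le_sup' _ (Finset.mem_univ j)
  -- the alternating-sign vector
  set v : Fin (m+1) → ℝ := fun c => (-1 : ℝ)^(c:ℕ) * |v₀ c| with hvdef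
  have hPfact : P = M⁻¹ * (M⁻¹)ᵀ := by
    rw [hPdef, hSdef, Matrix.mul_inv_rev, Matrix.transpose_nonsing_inv]
  have hdotP : ∀ x : Fin (m+1) → ℝ,
      x ⬝ᵥ (P *ᵥ x) = ((M⁻¹)ᵀ *ᵥ x) ⬝ᵥ ((M⁻¹)ᵀ *ᵥ x) := by
    intro x
    rw [hPfact, ← Matrix.mulVec_mulVec, dotProduct_mulVec, ← Matrix.vecMul_transpose,
      Matrix.transpose_transpose]
  have he1 : v ⬝ᵥ v = v₀ ⬝ᵥ v₀ := by
    apply Finset.sum_congr rfl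
    intro c _
    simp only [hvdef]
    have h2 : ((-1 : ℝ)^(c:ℕ))^2 = 1 := by
      rw [← pow_mul, mul_comm, pow_mul]; norm_num
    calc ((-1:ℝ)^(c:ℕ) * |v₀ c|) * ((-1:ℝ)^(c:ℕ) * |v₀ c|) =
          ((-1:ℝ)^(c:ℕ))^2 * (|v₀ c| * |v₀ c|) := by ring
      _ = v₀ c * v₀ c := by rw [h2, one_mul, abs_mul_abs_self]
  have he2 : v₀ ⬝ᵥ (P *ᵥ v₀) ≤ v ⬝ᵥ (P *ᵥ v) := by
    rw [hdotP, hdotP]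
    apply Finset.sum_le_sum
    intro j _
    set g0 := (M⁻¹)ᵀ *ᵥ v₀ with hg0
    set g := (M⁻¹)ᵀ *ᵥ v with hg
    have habs : |g0 j| ≤ (-1 : ℝ)^(j:ℕ) * g j := by
      have hexp : (-1 : ℝ)^(j:ℕ) * g j =
          ∑ c : Fin (m+1), ((-1:ℝ)^((c:ℕ)+(j:ℕ)) * M⁻¹ c j) * |v₀ c| := by
        rw [hg, Matrix.mulVec, dotProduct, Finset.mul_sum]
        apply Finset.sum_congr rfl
        intro c _
        simp only [Matrix.transpose_apply, hvdef, pow_add]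
        ring
      have hableq : |g0 j| ≤ ∑ c : Fin (m+1), ((-1:ℝ)^((c:ℕ)+(j:ℕ)) * M⁻¹ c j) * |v₀ c| := by
        rw [hg0, Matrix.mulVec, dotProduct]
        calc |∑ c : Fin (m+1), (M⁻¹)ᵀ j c * v₀ c| ≤ ∑ c : Fin (m+1), |(M⁻¹)ᵀ j c * v₀ c| :=
              Finset.abs_sum_le_sum_abs _ _
          _ = ∑ c : Fin (m+1), ((-1:ℝ)^((c:ℕ)+(j:ℕ)) * M⁻¹ c j) * |v₀ c| := by
              apply Finset.sum_congr rfl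
              intro c _
              rw [abs_mul, Matrix.transpose_apply]
              congr 1
              rw [← abs_of_nonneg (inv_checkerboard hM hMns c j)]
              rw [abs_mul, abs_pow, abs_neg, abs_one, one_pow, one_mul]
      rw [hexp]
      exact hableq
    have h0 : (0:ℝ) ≤ |g0 j| := abs_nonneg _
    calc g0 j * g0 j = |g0 j| * |g0 j| := (abs_mul_abs_self _).symm
      _ ≤ ((-1 : ℝ)^(j:ℕ) * g j) * ((-1 : ℝ)^(j:ℕ) * g j) := mul_self_le_mul_self h0 habs
      _ = (((-1:ℝ)^(j:ℕ))^2) * (g j * g j) := by ring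
      _ = g j * g j := by
          rw [show ((-1:ℝ)^(j:ℕ))^2 = 1 by rw [← pow_mul, mul_comm, pow_mul]; norm_num,
            one_mul]
  have he0 : v₀ ⬝ᵥ (P *ᵥ v₀) = tau * (v₀ ⬝ᵥ v₀) := by
    rw [hPv₀, dotProduct_smul, smul_eq_mul, htaueq]
  have he3 := le_rayleigh hP v
  have heq : v ⬝ᵥ (P *ᵥ v) = tau * (v ⬝ᵥ v) := by
    apply le_antisymm
    · exact he3
    · rw [he1, ← he0]; exact he2
  have hPv : P *ᵥ v = tau • v := rayleigh_eq_sup hP v heq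
  have hvne : v ≠ 0 := by
    intro h
    apply hv₀ne
    have : v₀ ⬝ᵥ v₀ = 0 := by rw [← he1, h]; simp [dotProduct]
    exact dotProduct_self_eq_zero.mp this
  have hSv : S *ᵥ v = lam • v := by
    have h1 : S *ᵥ (P *ᵥ v) = v := by
      rw [Matrix.mulVec_mulVec, hPdef, Matrix.mul_nonsing_inv _ hSdet, Matrix.one_mulVec]
    rw [hPv, Matrix.mulVec_smul] at h1
    have htaupos : 0 < tau := htaueq ▸ inv_pos.mpr hlampos
    have h2 : S *ᵥ v = tau⁻¹ • v := smul_cancel_inv (ne_of_gt htaupos) h1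
    rw [h2, htaueq, inv_inv]
  refine ⟨v, hvne, ?_, ?_⟩
  · intro c
    simp only [hvdef]
    rw [abs_mul, abs_pow, abs_neg, abs_one, one_pow, one_mul, abs_abs]
  · rw [hminEig]; exact hSv

end assembly
lemma main_ineq {m : ℕ} (M K : Matrix (Fin (m+1)) (Fin (m+1)) ℝ)
    (hM : TotPos M) (hMns : IsUnit M.det)
    (hK : TotPos K) (hKs : RowStoch K) (hKns : IsUnit K.det) :
    minEig ((M * K)ᵀ * (M * K)) ≤ minEig (Mᵀ * M) := by
  obtain ⟨v, hvne, hvsign, hveig⟩ := evec_alt hM hMns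
  have hS : (Mᵀ * M).IsHermitian := herm_tmul M
  have hlampos : 0 < minEig (Mᵀ * M) := by
    rw [minEig_eq_inf' hS]; exact inf'_pos hS (tmul_pd hMns)
  have hN : ((M * K)ᵀ * (M * K)).IsHermitian := herm_tmul (M * K)
  set x := K⁻¹ *ᵥ v with hx
  have hKx : K *ᵥ x = v := by
    rw [hx, Matrix.mulVec_mulVec, Matrix.mul_nonsing_inv _ hKns, Matrix.one_mulVec]
  have hxne : x ≠ 0 := by
    intro h; apply hvne; rw [← hKx, h, Matrix.mulVec_zero]
  have hNx : x ⬝ᵥ (((M * K)ᵀ * (M * K)) *ᵥ x) = minEig (Mᵀ * M) * (v ⬝ᵥ v) := by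
    have h1 := dot_tmul (M * K) x
    have h2 : (M * K) *ᵥ x = M *ᵥ v := by rw [← Matrix.mulVec_mulVec, hKx]
    have h3 := dot_tmul M v
    rw [h1, h2, ← h3, hveig, dotProduct_smul, smul_eq_mul]
  have hvv_le : v ⬝ᵥ v ≤ x ⬝ᵥ x := by
    set w : Fin (m+1) → ℝ := fun c => |v c| with hw
    have hveq : v = fun c : Fin (m+1) => (-1:ℝ)^(c:ℕ) * w c := funext fun c => hvsign c
    have hkv := key_vec hK hKs hKns w (fun c => abs_nonneg _)
    have hl : v ⬝ᵥ v = ∑ r, (w r)^2 := by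
      apply Finset.sum_congr rfl; intro r _
      simp only [hw, pow_two, abs_mul_abs_self]
    have hr : x ⬝ᵥ x = ∑ r, ((K⁻¹ *ᵥ fun c : Fin (m+1) => (-1:ℝ)^(c:ℕ) * w c) r)^2 := by
      rw [hx, ← hveq]
      simp [dotProduct, pow_two]
    rw [hl, hr]; exact hkv
  have hxx_pos : 0 < x ⬝ᵥ x := lt_of_lt_of_le (dot_self_pos hvne) hvv_le
  have hray := rayleigh_le hN x
  rw [minEig_eq_inf' hN]
  have hchain : (Finset.univ.inf' Finset.univ_nonempty hN.eigenvalues) * (x ⬝ᵥ x) ≤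
      minEig (Mᵀ * M) * (x ⬝ᵥ x) := by
    calc _ ≤ x ⬝ᵥ (((M * K)ᵀ * (M * K)) *ᵥ x) := hray
      _ = minEig (Mᵀ * M) * (v ⬝ᵥ v) := hNx
      _ ≤ minEig (Mᵀ * M) * (x ⬝ᵥ x) := mul_le_mul_of_nonneg_left hvv_le hlampos.le
  exact le_of_mul_le_mul_right hchain hxx_pos

theorem stmt11 (n : ℕ) (M K : Matrix (Fin n) (Fin n) ℝ)
    (hM : TotPos M) (hMns : IsUnit M.det)
    (hK : TotPos K) (hKs : RowStoch K) (hKns : IsUnit K.det) :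
    minSing (M * K) ≤ minSing M := by
  cases n with
  | zero =>
    have h0 : ∀ A : Matrix (Fin 0) (Fin 0) ℝ, minEig A = 0 := by
      intro A
      unfold minEig
      have he : {μ : ℝ | (A - μ • (1 : Matrix (Fin 0) (Fin 0) ℝ)).det = 0} = ∅ := by
        ext μ; simp [Matrix.det_fin_zero]
      rw [he, Real.sInf_empty]
    unfold minSing
    rw [h0, h0]
  | succ m =>
    unfold minSing
    exact Real.sqrt_le_sqrt (main_ineq M K hM hMns hK hKs hKns)
end

section
/- Let M be a nonsingular totally positive n×n matrix and K a nonsingular row-stochastic totally positive n×n matrix. Then κ_∞(M) ≤ κ_∞(MK) and κ_1(M) ≤ κ_1(K^T M). -/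
open Matrix BigOperators

lemma normInf_nonneg {n : ℕ} (A : Matrix (Fin n) (Fin n) ℝ) : 0 ≤ normInf A :=
  Real.iSup_nonneg fun _ => Finset.sum_nonneg fun _ _ => abs_nonneg _

lemma rowsum_le_normInf {n : ℕ} (A : Matrix (Fin n) (Fin n) ℝ) (i : Fin n) :
    ∑ j, |A i j| ≤ normInf A := by
  unfold normInf
  exact le_ciSup (Set.Finite.bddAbove (Set.finite_range fun i => ∑ j, |A i j|)) i

lemma normInf_le {n : ℕ} (A : Matrix (Fin n) (Fin n) ℝ) (c : ℝ) (hc : 0 ≤ c)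
    (h : ∀ i, ∑ j, |A i j| ≤ c) : normInf A ≤ c :=
  Real.iSup_le h hc

lemma normInf_mul_le {n : ℕ} (A B : Matrix (Fin n) (Fin n) ℝ) :
    normInf (A * B) ≤ normInf A * normInf B := by
  refine normInf_le _ _ (mul_nonneg (normInf_nonneg A) (normInf_nonneg B)) fun i => ?_
  calc ∑ j, |(A * B) i j| ≤ ∑ j, ∑ k, |A i k| * |B k j| := by
        refine Finset.sum_le_sum fun j _ => ?_
        rw [Matrix.mul_apply]
        exact (Finset.abs_sum_le_sum_abs _ _).trans (le_of_eq (by simp [abs_mul]))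
    _ = ∑ k, |A i k| * ∑ j, |B k j| := by
        rw [Finset.sum_comm]; simp [Finset.mul_sum]
    _ ≤ ∑ k, |A i k| * normInf B := by
        refine Finset.sum_le_sum fun k _ => ?_
        exact mul_le_mul_of_nonneg_left (rowsum_le_normInf B k) (abs_nonneg _)
    _ = (∑ k, |A i k|) * normInf B := by rw [Finset.sum_mul]
    _ ≤ normInf A * normInf B :=
        mul_le_mul_of_nonneg_right (rowsum_le_normInf A i) (normInf_nonneg B)

lemma normInf_stoch_le_one {n : ℕ} (K : Matrix (Fin n) (Fin n) ℝ) (hKs : RowStoch K) :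
    normInf K ≤ 1 := by
  refine normInf_le _ _ zero_le_one fun i => ?_
  have : ∑ j, |K i j| = ∑ j, K i j :=
    Finset.sum_congr rfl fun j _ => abs_of_nonneg (hKs.1 i j)
  rw [this, hKs.2 i]

lemma normInf_mul_stoch {n : ℕ} (M K : Matrix (Fin n) (Fin n) ℝ)
    (hM0 : ∀ i j, 0 ≤ M i j) (hKs : RowStoch K) : normInf (M * K) = normInf M := by
  unfold normInf
  refine congrArg _ (funext fun i => ?_)
  have h1 : ∀ j, |(M * K) i j| = (M * K) i j := fun j => by
    rw [Matrix.mul_apply]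
    exact abs_of_nonneg (Finset.sum_nonneg fun k _ => mul_nonneg (hM0 i k) (hKs.1 k j))
  calc ∑ j, |(M * K) i j| = ∑ j, ∑ k, M i k * K k j := by
        simp only [h1]
        exact Finset.sum_congr rfl fun j _ => Matrix.mul_apply
    _ = ∑ k, M i k * ∑ j, K k j := by rw [Finset.sum_comm]; simp [Finset.mul_sum]
    _ = ∑ k, M i k := by simp [hKs.2]
    _ = ∑ j, |M i j| := by
        exact Finset.sum_congr rfl fun j _ => (abs_of_nonneg (hM0 i j)).symm

lemma condInf_key {n : ℕ} (M K : Matrix (Fin n) (Fin n) ℝ)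
    (hM0 : ∀ i j, 0 ≤ M i j) (hKs : RowStoch K) (hKns : IsUnit K.det) :
    condInf M ≤ condInf (M * K) := by
  have hinv : M⁻¹ = K * (M * K)⁻¹ := by
    rw [Matrix.mul_inv_rev, ← Matrix.mul_assoc, Matrix.mul_nonsing_inv K hKns,
      Matrix.one_mul]
  have h2 : normInf M⁻¹ ≤ normInf (M * K)⁻¹ := by
    calc normInf M⁻¹ = normInf (K * (M * K)⁻¹) := by rw [hinv]
      _ ≤ normInf K * normInf (M * K)⁻¹ := normInf_mul_le _ _
      _ ≤ 1 * normInf (M * K)⁻¹ :=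
          mul_le_mul_of_nonneg_right (normInf_stoch_le_one K hKs) (normInf_nonneg _)
      _ = normInf (M * K)⁻¹ := one_mul _
  unfold condInf
  rw [← normInf_mul_stoch M K hM0 hKs]
  exact mul_le_mul_of_nonneg_left h2 (normInf_nonneg _)

lemma totPos_entry_nonneg {n : ℕ} (M : Matrix (Fin n) (Fin n) ℝ) (hM : TotPos M) :
    ∀ i j, 0 ≤ M i j := by
  intro i j
  have h := hM 1 (fun _ => i) (fun _ => j)
    (fun a b hab => absurd (Subsingleton.elim a b) hab.ne)
    (fun a b hab => absurd (Subsingleton.elim a b) hab.ne)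
  simpa [Matrix.det_fin_one] using h

theorem stmt12 (n : ℕ) (M K : Matrix (Fin n) (Fin n) ℝ)
    (hM : TotPos M) (hMns : IsUnit M.det)
    (hK : TotPos K) (hKs : RowStoch K) (hKns : IsUnit K.det) :
    condInf M ≤ condInf (M * K) ∧ cond1 M ≤ cond1 (Kᵀ * M) := by
  have hM0 := totPos_entry_nonneg M hM
  constructor
  · exact condInf_key M K hM0 hKs hKns
  · have hMT0 : ∀ i j, 0 ≤ Mᵀ i j := fun i j => hM0 j i
    have key := condInf_key Mᵀ K hMT0 hKs hKns
    have e1 : (Kᵀ * M)ᵀ = Mᵀ * K := by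
      rw [Matrix.transpose_mul, Matrix.transpose_transpose]
    have e2 : ((Kᵀ * M)⁻¹)ᵀ = (Mᵀ * K)⁻¹ := by
      rw [Matrix.transpose_nonsing_inv, e1]
    have e3 : (M⁻¹)ᵀ = (Mᵀ)⁻¹ := Matrix.transpose_nonsing_inv M
    unfold cond1 norm1
    rw [e1, e2, e3]
    exact key
end
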